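/- For every k ≥ 1 and every real z with 0 < z < 1, the multiple polylogarithm indexed by the composition (1,1,…,1) with k entries equals (1/k!)·(log(1/(1−z)))^k; that is, Σ_{n_1>n_2>…>n_k>0} z^{n_1}/(n_1 n_2 ⋯ n_k) = (−log(1−z))^k / k!. -/

import Mathlib

/-- The multiple polylogarithm `Li_{s_1,…,s_r}(z) = Σ_{n_1>…>n_r>0} z^{n_1}/(n_1^{s_1}⋯n_r^{s_r})`,
indexed by a list `(s_1,…,s_r)`; the polylogarithm of the empty composition is the
constant function `1`. -/
noncomputable def Li (l : List ℕ) (z : ℝ) : ℝ :=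
  match l with
  | [] => 1
  | s :: t =>
    ∑' f : {f : Fin (s :: t).length → ℕ // StrictAnti f ∧ ∀ i, 0 < f i},
      z ^ (f.1 ⟨0, Nat.succ_pos _⟩) * ∏ i, (1 : ℝ) / (f.1 i : ℝ) ^ ((s :: t).get i)

/-!
Put `a m = z ^ (m + 1) / (m + 1)`, so that `log (1 - z)⁻¹ = ∑ a m` and its `k`-th power is the sum
of `∏ i, a (m i)` over all `m : Fin k → ℕ`. Such tuples correspond bijectively to the indices
`n₁ > ⋯ > n_k > 0` through the suffix sums `n i = ∑_{j ≥ i} (m j + 1)`, under which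
`z ^ n₁ = ∏ z ^ (m j + 1)`. The partial-fraction identity
`∑_σ ∏ i, (x (σ i) + ⋯ + x (σ k))⁻¹ = ∏ i, (x i)⁻¹` (sum over permutations, `x` positive) shows
that summing `z ^ n₁ / (n₁ ⋯ n_k)` over the `k!` reorderings of `m` gives `∏ i, a (m i)`.
Hence `k! · Li_{1,…,1}(z) = (log (1 - z)⁻¹) ^ k`.
-/

open Finset Equiv
open scoped Nat

def suffixSum {M : Type*} [AddCommMonoid M] {k : ℕ} (x : Fin k → M) (i : Fin k) : M :=
  ∑ j ∈ Ici i, x j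

section suffixSum

variable {M : Type*} [AddCommMonoid M] {k : ℕ}

theorem suffixSum_zero (x : Fin (k + 1) → M) : suffixSum x 0 = ∑ j, x j := by
  simp [suffixSum]

theorem suffixSum_succ (x : Fin (k + 1) → M) (i : Fin k) :
    suffixSum x i.succ = suffixSum (fun j ↦ x j.succ) i :=
  Fin.sum_Ici_succ x i

theorem suffixSum_castSucc (x : Fin (k + 1) → M) (i : Fin k) :
    suffixSum x i.castSucc = x i.castSucc + suffixSum x i.succ := by
  have : Ioi i.castSucc = Ici i.succ := by ext j; simp [Fin.lt_def, Fin.le_def]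
  rw [suffixSum, Ici_eq_cons_Ioi, sum_cons, this, suffixSum]

theorem suffixSum_last (x : Fin (k + 1) → M) : suffixSum x (Fin.last k) = x (Fin.last k) := by
  simp [suffixSum, ← Fin.top_eq_last]

end suffixSum

theorem strictAnti_suffixSum {M : Type*} [AddCommMonoid M] [PartialOrder M]
    [IsOrderedCancelAddMonoid M] {n : ℕ} {x : Fin (n + 1) → M} (hx : ∀ i, 0 < x i) :
    StrictAnti (suffixSum x) :=
  Fin.strictAnti_iff_succ_lt.mpr fun i ↦ by
    rw [suffixSum_castSucc]
    exact lt_add_of_pos_left _ (hx _)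

-- `Fin.snoc g 0 i.succ` is `g (i + 1)`, read as `0` past the last index.
def gaps {k : ℕ} (g : Fin k → ℕ) (i : Fin k) : ℕ :=
  g i - Fin.snoc (α := fun _ ↦ ℕ) g 0 i.succ - 1

section gaps

variable {n : ℕ}

theorem gaps_castSucc (g : Fin (n + 1) → ℕ) (i : Fin n) :
    gaps g i.castSucc = g i.castSucc - g i.succ - 1 := by
  rw [gaps, Fin.succ_castSucc, Fin.snoc_castSucc]

theorem gaps_last (g : Fin (n + 1) → ℕ) : gaps g (Fin.last n) = g (Fin.last n) - 1 := by
  rw [gaps, Fin.succ_last, Fin.snoc_last, Nat.sub_zero]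

theorem gaps_suffixSum_add_one (f : Fin (n + 1) → ℕ) : gaps (suffixSum (f · + 1)) = f := by
  funext i
  induction i using Fin.lastCases with
  | last => simp [gaps_last, suffixSum_last]
  | cast i => simp [gaps_castSucc, suffixSum_castSucc]

theorem suffixSum_gaps_add_one {g : Fin (n + 1) → ℕ} (hg : StrictAnti g) (hpos : ∀ i, 0 < g i) :
    suffixSum (gaps g · + 1) = g := by
  funext i
  induction i using Fin.reverseInduction with
  | last =>
    have := hpos (Fin.last n)
    rw [suffixSum_last, gaps_last]
    omega
  | cast i ih =>
    have := hg (Fin.castSucc_lt_succ (i := i))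
    rw [suffixSum_castSucc, ih, gaps_castSucc]
    omega

def suffixSumEquiv (n : ℕ) :
    (Fin (n + 1) → ℕ) ≃ {g : Fin (n + 1) → ℕ // StrictAnti g ∧ ∀ i, 0 < g i} where
  toFun f := ⟨suffixSum (f · + 1), strictAnti_suffixSum fun _ ↦ Nat.succ_pos _,
    fun _ ↦ sum_pos (fun _ _ ↦ Nat.succ_pos _) nonempty_Ici⟩
  invFun g := gaps g.1
  left_inv := gaps_suffixSum_add_one
  right_inv g := Subtype.ext (suffixSum_gaps_add_one g.2.1 g.2.2)

end gaps

theorem prod_inv_swap_zero_succ {K : Type*} [Field K] {k : ℕ} (x : Fin (k + 1) → K)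
    {p : Fin (k + 1)} (hp : x p ≠ 0) :
    ∏ j : Fin k, (x (swap 0 p j.succ))⁻¹ = x p * ∏ j, (x j)⁻¹ := by
  have h := prod_comp (swap 0 p) fun j ↦ (x j)⁻¹
  rw [Fin.prod_univ_succ, swap_apply_left] at h
  rw [← h, ← mul_assoc, mul_inv_cancel₀ hp, one_mul]

theorem sum_perm_prod_inv_suffixSum {K : Type*} [Field K] [LinearOrder K] [IsStrictOrderedRing K]
    {k : ℕ} (x : Fin k → K) (hx : ∀ i, 0 < x i) :
    ∑ σ : Perm (Fin k), ∏ i, (suffixSum (x ∘ σ) i)⁻¹ = ∏ i, (x i)⁻¹ := by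
  induction k with
  | zero => simp
  | succ k ih =>
    -- Split `σ` into `σ 0 = p` and a permutation of the rest: the first factor is always
    -- `(∑ x)⁻¹`, the others are the identity for `x` with its `p`-th entry removed.
    have hsum : ∑ j, x j ≠ 0 := (sum_pos (fun j _ ↦ hx j) univ_nonempty).ne'
    have hfactor (p : Fin (k + 1)) (e : Perm (Fin k)) :
        ∏ i, (suffixSum (x ∘ Perm.decomposeFin.symm (p, e)) i)⁻¹ =
          (∑ j, x j)⁻¹ * ∏ i, (suffixSum ((fun j ↦ x (swap 0 p j.succ)) ∘ e) i)⁻¹ := by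
      rw [Fin.prod_univ_succ, suffixSum_zero]
      simp only [Function.comp_apply, Equiv.sum_comp, suffixSum_succ,
        Perm.decomposeFin_symm_apply_succ]
      rfl
    rw [← Equiv.sum_comp (Perm.decomposeFin (n := k)).symm, Fintype.sum_prod_type]
    simp only [hfactor, ← mul_sum, ih _ fun j ↦ hx _, prod_inv_swap_zero_succ x (hx _).ne',
      ← sum_mul, ← mul_assoc, inv_mul_cancel₀ hsum, one_mul]

theorem HasSum.pow_of_nonneg {ι : Type*} {g : ι → ℝ} {a : ℝ} (h : HasSum g a) (hg : 0 ≤ g)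
    (k : ℕ) : HasSum (fun f : Fin k → ι ↦ ∏ i, g (f i)) (a ^ k) := by
  induction k with
  | zero => simp
  | succ k ih =>
    have hnn : 0 ≤ fun f : Fin k → ι ↦ ∏ i, g (f i) := fun f ↦ prod_nonneg fun i _ ↦ hg _
    have hs := h.summable.mul_of_nonneg ih.summable hg hnn
    have hprod : HasSum (fun p : ι × (Fin k → ι) ↦ g p.1 * ∏ i, g (p.2 i)) (a * a ^ k) :=
      HasSum.mul (f := g) (g := fun f : Fin k → ι ↦ ∏ i, g (f i)) h ih hs
    rw [pow_succ']
    refine (Fin.consEquiv fun _ ↦ ι).hasSum_iff.mp (hprod.congr_fun fun p ↦ ?_)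
    simp [Fin.consEquiv, Fin.prod_univ_succ]

theorem HasSum.div_factorial_of_sum_perm_comp {κ ι : Type*} [Fintype κ] [DecidableEq κ]
    {W : (κ → ι) → ℝ} (hW : 0 ≤ W) {a : ℝ}
    (h : HasSum (fun f ↦ ∑ σ : Perm κ, W (f ∘ σ)) a) :
    HasSum W (a / (Fintype.card κ)!) := by
  have hW' : Summable W := by
    refine .of_nonneg_of_le hW (fun f ↦ ?_) h.summable
    simpa using single_le_sum (f := fun σ : Perm κ ↦ W (f ∘ σ)) (fun σ _ ↦ hW _) (mem_univ 1)
  have hcomp (σ : Perm κ) : HasSum (fun f : κ → ι ↦ W (f ∘ σ)) (∑' f, W f) :=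
    (Equiv.arrowCongr σ.symm (Equiv.refl ι)).hasSum_iff.mpr hW'.hasSum
  rw [← (hasSum_sum fun σ _ ↦ hcomp σ).unique h, sum_const, card_univ, Fintype.card_perm,
    nsmul_eq_mul, mul_div_cancel_left₀ _ (by positivity)]
  exact hW'.hasSum

theorem sum_perm_pow_suffixSum_mul_prod_inv {n : ℕ} (z : ℝ) (f : Fin (n + 1) → ℕ) :
    ∑ σ : Perm (Fin (n + 1)), z ^ suffixSum (fun j ↦ f (σ j) + 1) 0 *
        ∏ i, ((suffixSum (fun j ↦ f (σ j) + 1) i : ℕ) : ℝ)⁻¹ =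
      ∏ i, z ^ (f i + 1) / (f i + 1) := by
  have hcast (σ : Perm (Fin (n + 1))) (i : Fin (n + 1)) :
      ((suffixSum (fun j ↦ f (σ j) + 1) i : ℕ) : ℝ) =
        suffixSum ((fun j ↦ (f j : ℝ) + 1) ∘ σ) i := by
    simp [suffixSum]
  have hexp (σ : Perm (Fin (n + 1))) : ∑ j, (f (σ j) + 1) = ∑ j, (f j + 1) :=
    Equiv.sum_comp σ (fun j ↦ f j + 1)
  simp only [suffixSum_zero, hexp, hcast]
  rw [← mul_sum, sum_perm_prod_inv_suffixSum _ fun j ↦ by positivity, ← prod_pow_eq_pow_sum,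
    ← prod_mul_distrib]
  simp [div_eq_mul_inv]

theorem hasSum_pow_mul_prod_inv_of_strictAnti (n : ℕ) {z : ℝ} (hz0 : 0 ≤ z) (hz1 : z < 1) :
    HasSum (fun g : {g : Fin (n + 1) → ℕ // StrictAnti g ∧ ∀ i, 0 < g i} ↦
        z ^ g.1 0 * ∏ i, (g.1 i : ℝ)⁻¹)
      (Real.log ((1 - z)⁻¹) ^ (n + 1) / (n + 1)!) := by
  have hlog : HasSum (fun m : ℕ ↦ z ^ (m + 1) / (m + 1)) (Real.log ((1 - z)⁻¹)) := by
    rw [Real.log_inv]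
    exact Real.hasSum_pow_div_log_of_abs_lt_one (by rwa [abs_of_nonneg hz0])
  have hpow := hlog.pow_of_nonneg (fun m ↦ by positivity) (n + 1)
  simp only [← sum_perm_pow_suffixSum_mul_prod_inv] at hpow
  have hW := HasSum.div_factorial_of_sum_perm_comp
    (W := fun f ↦ z ^ suffixSum (f · + 1) 0 * ∏ i, ((suffixSum (f · + 1) i : ℕ) : ℝ)⁻¹)
    (fun f ↦ by positivity) hpow
  rw [Fintype.card_fin] at hW
  exact (suffixSumEquiv n).hasSum_iff.mp hW

/-- for every `k ≥ 1` and `0 < z < 1`,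
`Li_{1,…,1}(z) = (1/k!)·(log(1/(1−z)))^k` (with `k` ones), i.e.
`Σ_{n_1>…>n_k>0} z^{n_1}/(n_1⋯n_k) = (log((1−z)⁻¹))^k / k!`. -/
theorem Li_replicate_one (k : ℕ) (hk : 1 ≤ k) (z : ℝ) (hz0 : 0 < z) (hz1 : z < 1) :
    Li (List.replicate k 1) z = Real.log ((1 - z)⁻¹) ^ k / (Nat.factorial k : ℝ) := by
  obtain ⟨n, rfl⟩ := Nat.exists_eq_add_of_le' hk
  -- The index type depends on the length, which can only be rewritten once the sum is evaluated.
  calc Li (List.replicate (n + 1) 1) z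
      = ∑' g : {g : Fin ((List.replicate n 1).length + 1) → ℕ // StrictAnti g ∧ ∀ i, 0 < g i},
          z ^ g.1 0 * ∏ i, (g.1 i : ℝ)⁻¹ := by
        rw [List.replicate_succ, Li]
        refine tsum_congr fun g ↦ congrArg _ (prod_congr rfl fun i _ ↦ ?_)
        simp [← List.replicate_succ]
    _ = Real.log ((1 - z)⁻¹) ^ (n + 1) / (n + 1)! := by
        rw [(hasSum_pow_mul_prod_inv_of_strictAnti _ hz0.le hz1).tsum_eq, List.length_replicate]
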